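/- arXiv:1310.3235 — 6 statements merged into one kernel-verified Lean document; each statement's English description precedes it below -/
import Mathlib

section
/- Let n ≥ 1 be a natural number and let W : ℕ → ℕ satisfy W 0 = 1 and W i ≤ (2n).choose i for all 1 ≤ i ≤ n. Then the function f : ℝ → ℝ defined by f(p) = ∑_{i=0}^{n} (W i) · (p/2)^i · (1 − p/2)^{2n−i} is strictly antitone on the interval [0, 1/n]. -/
/-!
Put `q = p / 2` and `m = 2n`. The derivative of `q ↦ q ^ i * (1 - q) ^ (m - i)` equals
`q ^ (i - 1) * (1 - q) ^ (m - i - 1) * (i - m q)`, which is nonnegative for `1 ≤ i < m` as long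
as `m q ≤ 1`, while for `i = 0` it is negative. So on `[0, 1/m]` replacing `W 0` by `1` and every
other `W i` by `m.choose i` can only increase the derivative of the sum; for binomial weights it
telescopes to `-(n + 1) * m.choose (n + 1) * q ^ n * (1 - q) ^ (m - n - 1) < 0`.
-/
open Finset

def powMulOneSubPowDeriv (m i : ℕ) (q : ℝ) : ℝ :=
  i * q ^ (i - 1) * (1 - q) ^ (m - i) - (m - i : ℕ) * q ^ i * (1 - q) ^ (m - i - 1)

section

variable {m i k : ℕ} {q : ℝ}

theorem hasDerivAt_pow_mul_one_sub_pow (m i : ℕ) (q : ℝ) :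
    HasDerivAt (fun x : ℝ => x ^ i * (1 - x) ^ (m - i)) (powMulOneSubPowDeriv m i q) q := by
  refine ((hasDerivAt_pow i q).mul (((hasDerivAt_id' q).const_sub 1).pow (m - i))).congr_deriv ?_
  simp only [powMulOneSubPowDeriv, Pi.pow_apply]
  ring

theorem powMulOneSubPowDeriv_zero (m : ℕ) (q : ℝ) :
    powMulOneSubPowDeriv m 0 q = -(m * (1 - q) ^ (m - 1)) := by
  simp [powMulOneSubPowDeriv]

theorem powMulOneSubPowDeriv_nonneg (hi : 1 ≤ i) (him : i < m) (hq : 0 ≤ q) (hmq : m * q ≤ 1) :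
    0 ≤ powMulOneSubPowDeriv m i q := by
  have hi' : (1 : ℝ) ≤ i := by exact_mod_cast hi
  have hq1 : q ≤ 1 := by
    have : (1 : ℝ) ≤ m := by exact_mod_cast hi.trans him.le
    nlinarith
  have hfactor : powMulOneSubPowDeriv m i q
      = q ^ (i - 1) * (1 - q) ^ (m - i - 1) * (i - m * q) := by
    obtain ⟨a, rfl⟩ := Nat.exists_eq_add_of_le hi
    obtain ⟨b, rfl⟩ := Nat.exists_eq_add_of_lt him
    simp only [powMulOneSubPowDeriv, show 1 + a + b + 1 - (1 + a) = b + 1 by omega,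
      Nat.add_sub_cancel, Nat.add_sub_cancel_left]
    push_cast
    ring
  rw [hfactor]
  have : 0 ≤ 1 - q := by linarith
  have : 0 ≤ (i : ℝ) - m * q := by linarith
  positivity

theorem sum_range_choose_mul_powMulOneSubPowDeriv (m k : ℕ) (q : ℝ) :
    ∑ i ∈ range k, (m.choose i : ℝ) * powMulOneSubPowDeriv m i q
      = -(k * m.choose k * q ^ (k - 1) * (1 - q) ^ (m - k)) := by
  refine sum_range_induction _ (fun k : ℕ => -(k * m.choose k * q ^ (k - 1) * (1 - q) ^ (m - k)))
    (by simp) k fun j _ => ?_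
  have hchoose : (m.choose (j + 1) : ℝ) * (j + 1) = m.choose j * (m - j : ℕ) := by
    exact_mod_cast m.choose_succ_right_eq j
  simp only [powMulOneSubPowDeriv, Nat.add_sub_cancel, Nat.sub_sub]
  push_cast
  linear_combination -(q ^ j * (1 - q) ^ (m - (j + 1))) * hchoose

theorem sum_range_mul_powMulOneSubPowDeriv_neg (w : ℕ → ℝ) (hkm : k < m) (hw0 : 1 ≤ w 0)
    (hw : ∀ i, 1 ≤ i → i ≤ k → w i ≤ m.choose i) (hq : 0 < q) (hmq : m * q < 1) :
    ∑ i ∈ range (k + 1), w i * powMulOneSubPowDeriv m i q < 0 := by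
  have hq1 : q < 1 := by
    have : (1 : ℝ) ≤ m := by exact_mod_cast Nat.one_le_of_lt hkm
    nlinarith
  have hle : ∀ i ∈ range (k + 1),
      w i * powMulOneSubPowDeriv m i q ≤ m.choose i * powMulOneSubPowDeriv m i q := by
    intro i hi
    rcases Nat.eq_zero_or_pos i with rfl | hi0
    · have hd : powMulOneSubPowDeriv m 0 q ≤ 0 := by
        rw [powMulOneSubPowDeriv_zero]
        have : 0 ≤ 1 - q := by linarith
        simp only [Left.neg_nonpos_iff]
        positivity
      simpa using mul_le_mul_of_nonpos_right hw0 hd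
    · have hik : i ≤ k := Nat.lt_succ_iff.mp (mem_range.mp hi)
      exact mul_le_mul_of_nonneg_right (hw i hi0 hik)
        (powMulOneSubPowDeriv_nonneg hi0 (hik.trans_lt hkm) hq.le hmq.le)
  have hchoose : (0 : ℝ) < m.choose (k + 1) := by exact_mod_cast Nat.choose_pos hkm
  have hr : 0 < 1 - q := by linarith
  calc ∑ i ∈ range (k + 1), w i * powMulOneSubPowDeriv m i q
      ≤ ∑ i ∈ range (k + 1), (m.choose i : ℝ) * powMulOneSubPowDeriv m i q := sum_le_sum hle
    _ = -((k + 1 : ℕ) * m.choose (k + 1) * q ^ k * (1 - q) ^ (m - (k + 1))) :=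
        sum_range_choose_mul_powMulOneSubPowDeriv m (k + 1) q
    _ < 0 := by
        simp only [Left.neg_neg_iff]
        positivity

theorem strictAntiOn_sum_range_mul_pow_mul_one_sub_pow (w : ℕ → ℝ) (hkm : k < m)
    (hw0 : 1 ≤ w 0) (hw : ∀ i, 1 ≤ i → i ≤ k → w i ≤ m.choose i) :
    StrictAntiOn (fun q : ℝ => ∑ i ∈ range (k + 1), w i * q ^ i * (1 - q) ^ (m - i))
      (Set.Icc 0 (1 / (m : ℝ))) := by
  have hm : (0 : ℝ) < m := by exact_mod_cast Nat.zero_lt_of_lt hkm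
  refine strictAntiOn_of_deriv_neg (convex_Icc _ _) (by fun_prop) fun q hq => ?_
  rw [interior_Icc, Set.mem_Ioo, lt_div_iff₀ hm] at hq
  have hderiv : HasDerivAt (fun q : ℝ => ∑ i ∈ range (k + 1), w i * q ^ i * (1 - q) ^ (m - i))
      (∑ i ∈ range (k + 1), w i * powMulOneSubPowDeriv m i q) q := by
    simpa only [mul_assoc] using
      HasDerivAt.fun_sum fun i _ => (hasDerivAt_pow_mul_one_sub_pow m i q).const_mul (w i)
  rw [hderiv.deriv]
  exact sum_range_mul_powMulOneSubPowDeriv_neg w hkm hw0 hw hq.1 (by linarith)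

end

/-- The weight-enumerator probability polynomial of the trivial logical class,
`f p = ∑_{i=0}^{n} W i * (p/2)^i * (1 - p/2)^(2n - i)`, is strictly decreasing on
`[0, 1/n]`, whenever `W 0 = 1` and `W i ≤ (2n).choose i` for `1 ≤ i ≤ n`. -/
theorem trivial_class_prob_strictAntiOn (n : ℕ) (hn : 1 ≤ n) (W : ℕ → ℕ)
    (hW0 : W 0 = 1) (hW : ∀ i, 1 ≤ i → i ≤ n → W i ≤ (2 * n).choose i) :
    StrictAntiOn
      (fun p : ℝ => ∑ i ∈ Finset.range (n + 1),
        (W i : ℝ) * (p / 2) ^ i * (1 - p / 2) ^ (2 * n - i))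
      (Set.Icc 0 (1 / (n : ℝ))) := by
  have hhalf : StrictAntiOn
      (fun q : ℝ => ∑ i ∈ range (n + 1), (W i : ℝ) * q ^ i * (1 - q) ^ (2 * n - i))
      (Set.Icc 0 (1 / ((2 * n : ℕ) : ℝ))) :=
    strictAntiOn_sum_range_mul_pow_mul_one_sub_pow _ (by omega) (by simp [hW0])
      fun i hi hin => by exact_mod_cast hW i hi hin
  refine hhalf.comp_strictMonoOn (fun x _ y _ hxy => by linarith) fun p hp => ?_
  obtain ⟨hp0, hpn⟩ := hp
  refine ⟨by linarith, ?_⟩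
  have hbound : 1 / ((2 * n : ℕ) : ℝ) = 1 / n / 2 := by push_cast; ring
  linarith
end

section
/- Let n ≥ 1 be a natural number, let p be a real number with 0 < p ≤ 1/n, and let W : ℕ → ℕ satisfy W i ≤ (2n).choose i for all 1 ≤ i ≤ n. Then ∑_{i=1}^{n} (W i) · (p/2)^i · (1 − p/2)^{2n−i} · (i − n·p)/(p·(1 − p/2)) < n · (1 − p/2)^{2n−1}. -/
/-!
Put `x = p/2` and `m = 2n`, so that `m x = n p ≤ 1` and `p (1 - p/2) = 2 x (1 - x)`. For `i ≥ 1`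
the factor `i - m x` is nonnegative, so replacing `W i` by `m.choose i` and extending the range
from `1..n` to `1..m` can only increase the sum, strictly because of the term `i = m`. The binomial
distribution `Bin(m, x)` has mean `m x`, so the full sum over `0..m` of
`C(m,i) x^i (1-x)^(m-i) (i - m x)` vanishes; hence its part over `1..m` equals minus the `i = 0`
term, `m x (1-x)^m`, which after division by `2 x (1 - x)` is `n (1 - x)^(2n-1)`.
-/
open Finset

theorem sum_range_choose_mul_pow_mul_sub_eq_zero {R : Type*} [CommRing R] (m : ℕ) (x : R) :
    ∑ i ∈ range (m + 1), (m.choose i : R) * x ^ i * (1 - x) ^ (m - i) * (i - m * x) = 0 := by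
  have hsum := congrArg (Polynomial.eval x) (bernsteinPolynomial.sum R m)
  have hmean := congrArg (Polynomial.eval x) (bernsteinPolynomial.sum_smul R m)
  simp only [bernsteinPolynomial, Polynomial.eval_finsetSum, Polynomial.eval_mul,
    Polynomial.eval_pow, Polynomial.eval_natCast, Polynomial.eval_X, Polynomial.eval_sub,
    Polynomial.eval_one, nsmul_eq_mul] at hsum hmean
  simp only [mul_sub, sum_sub_distrib, ← sum_mul, hsum]
  rw [← hmean]
  simp only [mul_comm, mul_left_comm, mul_assoc, one_mul, sub_self]

theorem sum_Icc_choose_mul_pow_mul_sub {R : Type*} [CommRing R] (m : ℕ) (x : R) :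
    ∑ i ∈ Icc 1 m, (m.choose i : R) * x ^ i * (1 - x) ^ (m - i) * (i - m * x)
      = m * x * (1 - x) ^ m := by
  have h := sum_range_choose_mul_pow_mul_sub_eq_zero m x
  rw [range_eq_Ico, sum_eq_sum_Ico_succ_bot (by omega), zero_add, Ico_add_one_right_eq_Icc] at h
  simp only [Nat.choose_zero_right, Nat.cast_one, pow_zero, one_mul, Nat.sub_zero,
    Nat.cast_zero, zero_sub] at h
  linear_combination h

theorem sum_Icc_mul_pow_mul_sub_lt {n m : ℕ} (hnm : n < m) {x : ℝ} (hx₀ : 0 < x) (hx₁ : x < 1)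
    (hmx : m * x ≤ 1) (W : ℕ → ℝ) (hW : ∀ i, 1 ≤ i → i ≤ n → W i ≤ m.choose i) :
    ∑ i ∈ Icc 1 n, W i * x ^ i * (1 - x) ^ (m - i) * (i - m * x) < m * x * (1 - x) ^ m := by
  have hweight : ∀ i ∈ Icc 1 m, 0 ≤ x ^ i * (1 - x) ^ (m - i) * (i - m * x) := by
    intro i hi
    have : (1 : ℝ) ≤ i := by exact_mod_cast (mem_Icc.1 hi).1
    have : 0 ≤ 1 - x := by linarith
    have : 0 ≤ (i : ℝ) - m * x := by linarith
    positivity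
  rw [← sum_Icc_choose_mul_pow_mul_sub]
  calc ∑ i ∈ Icc 1 n, W i * x ^ i * (1 - x) ^ (m - i) * (i - m * x)
      ≤ ∑ i ∈ Icc 1 n, (m.choose i : ℝ) * x ^ i * (1 - x) ^ (m - i) * (i - m * x) := by
        refine sum_le_sum fun i hi => ?_
        obtain ⟨h1, h2⟩ := mem_Icc.1 hi
        simpa only [mul_assoc] using
          mul_le_mul_of_nonneg_right (hW i h1 h2) (hweight i (mem_Icc.2 ⟨h1, h2.trans hnm.le⟩))
    _ < ∑ i ∈ Icc 1 m, (m.choose i : ℝ) * x ^ i * (1 - x) ^ (m - i) * (i - m * x) := by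
        refine sum_lt_sum_of_subset (Icc_subset_Icc_right hnm.le) (i := m) ?_ ?_ ?_ ?_
        · simp only [mem_Icc]; omega
        · simp only [mem_Icc]; omega
        · have : (0 : ℝ) < m := by exact_mod_cast (Nat.zero_le n).trans_lt hnm
          simp only [Nat.choose_self, Nat.cast_one, one_mul, Nat.sub_self, pow_zero, mul_one]
          exact mul_pos (pow_pos hx₀ m) (by nlinarith)
        · intro j hj _
          simpa only [mul_assoc] using mul_nonneg (Nat.cast_nonneg _) (hweight j hj)

/-- For `0 < p ≤ 1/n` and weight-enumerator coefficients `W i ≤ (2n).choose i`,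
the derivative-related sum `∑_{i=1}^{n} W i * (p/2)^i * (1-p/2)^(2n-i) * (i - n p)/(p (1-p/2))`
is strictly smaller than `n * (1 - p/2)^(2n - 1)`. -/
theorem derivative_sum_lt (n : ℕ) (hn : 1 ≤ n) (p : ℝ) (hp : 0 < p)
    (hpn : p ≤ 1 / (n : ℝ)) (W : ℕ → ℕ)
    (hW : ∀ i, 1 ≤ i → i ≤ n → W i ≤ (2 * n).choose i) :
    ∑ i ∈ Finset.Icc 1 n,
        (W i : ℝ) * (p / 2) ^ i * (1 - p / 2) ^ (2 * n - i) *
          (((i : ℝ) - n * p) / (p * (1 - p / 2)))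
      < (n : ℝ) * (1 - p / 2) ^ (2 * n - 1) := by
  have hn₁ : (1 : ℝ) ≤ n := by exact_mod_cast hn
  have hn₀ : (0 : ℝ) < n := by linarith
  have hnp : ((2 * n : ℕ) : ℝ) * (p / 2) = n * p := by push_cast; ring
  have hnp_le : (n : ℝ) * p ≤ 1 := by rwa [le_div_iff₀' hn₀] at hpn
  have hp₁ : p ≤ 1 := by nlinarith
  have hden : 0 < p * (1 - p / 2) := by nlinarith
  have key := sum_Icc_mul_pow_mul_sub_lt (n := n) (m := 2 * n) (by omega) (half_pos hp)
    (by linarith) (by linarith) (fun i => (W i : ℝ)) (fun i h₁ h₂ => by exact_mod_cast hW i h₁ h₂)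
  rw [hnp, ← pow_sub_one_mul (by omega : 2 * n ≠ 0)] at key
  simp only [mul_div_assoc', ← sum_div, div_lt_iff₀ hden]
  linear_combination key
end

section
/- Let n ≥ 1 be a natural number and let B : ℕ → ℕ satisfy B 0 = 0. Then the function g : ℝ → ℝ defined by g(p) = ∑_{i=0}^{n} (B i) · (p/2)^i · (1 − p/2)^{2n−i} is monotone nondecreasing on the interval [0, 1/n]. -/
/-!
Each summand with `i ≥ 1` is a nonnegative multiple of `x ^ i * (1 - x) ^ (2n - i)` at `x = p / 2`.
The polynomial `x ^ i * (1 - x) ^ m` increases up to its maximum at `x = i / (i + m)`, which for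
`i + m = 2n` is at least `1 / (2n)`, so every such summand is nondecreasing for `p ≤ 1 / n`;
the summand with `i = 0` vanishes because `B 0 = 0`.
-/

open Set

lemma hasDerivAt_pow_succ_mul_one_sub_pow_succ (a b : ℕ) (x : ℝ) :
    HasDerivAt (fun x : ℝ => x ^ (a + 1) * (1 - x) ^ (b + 1))
      (x ^ a * (1 - x) ^ b * ((a + 1) - (a + b + 2) * x)) x := by
  refine ((hasDerivAt_pow (a + 1) x).mul
    (((hasDerivAt_id x).const_sub 1).pow (b + 1))).congr_deriv ?_
  simp only [id, Pi.pow_apply, Nat.add_sub_cancel, Nat.cast_add, Nat.cast_one]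
  ring

lemma monotoneOn_pow_mul_one_sub_pow (i m : ℕ) :
    MonotoneOn (fun x : ℝ => x ^ i * (1 - x) ^ m) (Icc 0 (i / (i + m))) := by
  rcases i with _ | a
  · simp
  rcases m with _ | b
  · intro x hx y _ hxy
    simpa using pow_le_pow_left₀ hx.1 hxy (a + 1)
  refine monotoneOn_of_hasDerivWithinAt_nonneg (convex_Icc _ _) (by fun_prop)
    (fun x _ => (hasDerivAt_pow_succ_mul_one_sub_pow_succ a b x).hasDerivWithinAt) ?_
  rw [interior_Icc]
  rintro x ⟨hx0, hx⟩
  push_cast at hx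
  rw [lt_div_iff₀ (by positivity)] at hx
  have hx1 : x < 1 := by nlinarith
  have hlin : 0 ≤ ((a : ℝ) + 1) - (a + b + 2) * x := by linarith
  have hx1' : 0 ≤ 1 - x := by linarith
  positivity

lemma monotoneOn_half_pow_mul_one_sub_half_pow {n i : ℕ} (hi : 1 ≤ i) (hin : i ≤ 2 * n) :
    MonotoneOn (fun p : ℝ => (p / 2) ^ i * (1 - p / 2) ^ (2 * n - i)) (Icc 0 (1 / n)) := by
  refine (monotoneOn_pow_mul_one_sub_pow i (2 * n - i)).comp
    ((monotone_id.div_const (by norm_num : (0 : ℝ) ≤ 2)).monotoneOn _) ?_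
  rintro p ⟨hp0, hp⟩
  have hn : (0 : ℝ) < n := by exact_mod_cast (by omega : 0 < n)
  have hi' : (1 : ℝ) ≤ i := by exact_mod_cast hi
  rw [le_div_iff₀ hn] at hp
  refine ⟨by positivity, ?_⟩
  rw [Nat.cast_sub hin, add_sub_cancel, le_div_iff₀ (by push_cast; positivity)]
  push_cast
  nlinarith

theorem nontrivial_class_prob_monotoneOn_general (n : ℕ) (B : ℕ → ℕ)
    (hB0 : B 0 = 0) :
    MonotoneOn
      (fun p : ℝ => ∑ i ∈ Finset.range (n + 1),
        (B i : ℝ) * (p / 2) ^ i * (1 - p / 2) ^ (2 * n - i))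
      (Set.Icc 0 (1 / (n : ℝ))) := by
  intro p hp q hq hpq
  refine Finset.sum_le_sum fun i hi => ?_
  rcases Nat.eq_zero_or_pos i with rfl | hi1
  · simp [hB0]
  have hin : i ≤ 2 * n := by rw [Finset.mem_range] at hi; omega
  simp only [mul_assoc]
  exact mul_le_mul_of_nonneg_left
    (monotoneOn_half_pow_mul_one_sub_half_pow hi1 hin hp hq hpq) (Nat.cast_nonneg _)

/-- The weight-enumerator probability polynomial of a nontrivial coset
(`B 0 = 0`), `g p = ∑_{i=0}^{n} B i * (p/2)^i * (1 - p/2)^(2n - i)`, is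
monotone nondecreasing on `[0, 1/n]`. -/
theorem nontrivial_class_prob_monotoneOn (n : ℕ) (hn : 1 ≤ n) (B : ℕ → ℕ)
    (hB0 : B 0 = 0) :
    MonotoneOn
      (fun p : ℝ => ∑ i ∈ Finset.range (n + 1),
        (B i : ℝ) * (p / 2) ^ i * (1 - p / 2) ^ (2 * n - i))
      (Set.Icc 0 (1 / (n : ℝ))) :=
  nontrivial_class_prob_monotoneOn_general n B hB0
end

section
/- Let n ≥ 1 be a natural number, let W : ℕ → ℕ satisfy W 0 = 1 and W i ≤ (2n).choose i for all 1 ≤ i ≤ n, and let B : ℕ → ℕ satisfy B 0 = 0 and B i ≥ 1 for at least one i with 1 ≤ i ≤ n. Define f(p) = ∑_{i=0}^{n} (W i)(p/2)^i(1−p/2)^{2n−i} and g(p) = ∑_{i=0}^{n} (B i)(p/2)^i(1−p/2)^{2n−i}. Then the ratio p ↦ g(p)/f(p) is strictly monotone increasing on the half-open interval (0, 1/n]; consequently, for every real v > 0 there is at most one p ∈ (0, 1/n] with g(p) = v · f(p). -/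
/-!
With the odds `x = p / (2 - p)` one has `f p = (1 - p/2)^(2n) F x` and `g p = (1 - p/2)^(2n) G x`,
where `F x = ∑ W i x^i`, `G x = ∑ B i x^i`, and `p ↦ x` maps `(0, 1/n]` increasingly into
`(0, 1/(2n-1)]`. As `B 0 = 0`, `x (G'F - GF') = ∑ B i x^i (i F - x F')`, so `G / F` increases
wherever `x F' < F`, i.e. `∑ (i - 1) W i x^i < 0`. Replacing `W i` by `C(2n, i)` only increases
this sum, and the truncated binomial sum lies below the full one,
`∑_{i ≤ 2n} (i - 1) C(2n, i) x^i = (1 + x)^(2n-1) ((2n - 1) x - 1) ≤ 0`.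
-/

open Finset

theorem hasDerivAt_sum_mul_pow (s : Finset ℕ) (a : ℕ → ℝ) (x : ℝ) :
    HasDerivAt (fun y => ∑ i ∈ s, a i * y ^ i) (∑ i ∈ s, a i * (i * x ^ (i - 1))) x :=
  HasDerivAt.fun_sum fun i _ => (hasDerivAt_pow i x).const_mul (a i)

theorem mul_sum_mul_pow_pred (s : Finset ℕ) (a : ℕ → ℝ) (x : ℝ) :
    x * ∑ i ∈ s, a i * (i * x ^ (i - 1)) = ∑ i ∈ s, i * a i * x ^ i := by
  rw [mul_sum]
  refine sum_congr rfl fun i _ => ?_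
  rcases i with _ | i
  · simp
  · rw [pow_succ, Nat.add_sub_cancel]
    ring

theorem sum_range_choose_mul_pow (m : ℕ) (x : ℝ) :
    ∑ i ∈ range (m + 1), (m.choose i : ℝ) * x ^ i = (1 + x) ^ m := by
  rw [add_comm 1 x, add_pow]
  simp [mul_comm]

theorem sum_range_mul_choose_mul_pow (m : ℕ) (x : ℝ) :
    ∑ i ∈ range (m + 1), i * (m.choose i : ℝ) * x ^ i = m * x * (1 + x) ^ (m - 1) := by
  have hderiv := hasDerivAt_sum_mul_pow (range (m + 1)) (fun i => (m.choose i : ℝ)) x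
  rw [funext (sum_range_choose_mul_pow m)] at hderiv
  rw [← mul_sum_mul_pow_pred, hderiv.unique (((hasDerivAt_id x).const_add 1).pow m)]
  simp only [id, mul_one]
  ring

theorem sum_range_sub_one_mul_choose_mul_pow (m : ℕ) (x : ℝ) :
    ∑ i ∈ range (m + 2), ((i : ℝ) - 1) * (m + 1).choose i * x ^ i
      = (1 + x) ^ m * (m * x - 1) := by
  simp only [sub_mul, one_mul, sum_sub_distrib]
  rw [sum_range_mul_choose_mul_pow, sum_range_choose_mul_pow, Nat.add_sub_cancel, pow_succ]
  push_cast
  ring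

theorem sum_range_sub_one_mul_choose_mul_pow_neg {m k : ℕ} (hk : 1 ≤ k) (hkm : k < m) {x : ℝ}
    (hx : 0 < x) (hmx : ((m : ℝ) - 1) * x ≤ 1) :
    ∑ i ∈ range (k + 1), ((i : ℝ) - 1) * m.choose i * x ^ i < 0 := by
  obtain ⟨m, rfl⟩ : ∃ m', m = m' + 1 := ⟨m - 1, by omega⟩
  have hfull : ∑ i ∈ range (m + 2), ((i : ℝ) - 1) * (m + 1).choose i * x ^ i ≤ 0 := by
    rw [sum_range_sub_one_mul_choose_mul_pow]
    push_cast at hmx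
    exact mul_nonpos_of_nonneg_of_nonpos (by positivity) (by linarith)
  have htail : 0 < ∑ i ∈ Ico (k + 1) (m + 2), ((i : ℝ) - 1) * (m + 1).choose i * x ^ i := by
    refine sum_pos (fun i hi => ?_) (nonempty_Ico.2 (by omega))
    obtain ⟨hki, him⟩ := mem_Ico.1 hi
    have hi1 : (1 : ℝ) < i := by exact_mod_cast (by omega : 1 < i)
    have hchoose : 0 < (m + 1).choose i := Nat.choose_pos (by omega)
    have := sub_pos.2 hi1
    positivity
  rw [← sum_range_add_sum_Ico _ (by omega : k + 1 ≤ m + 2)] at hfull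
  linarith

theorem sum_sub_one_mul_mul_pow_le (s : Finset ℕ) {a c : ℕ → ℝ} (h0 : c 0 ≤ a 0)
    (h : ∀ i ∈ s, 1 ≤ i → a i ≤ c i) {x : ℝ} (hx : 0 ≤ x) :
    ∑ i ∈ s, ((i : ℝ) - 1) * a i * x ^ i ≤ ∑ i ∈ s, ((i : ℝ) - 1) * c i * x ^ i := by
  refine sum_le_sum fun i hi => ?_
  rcases Nat.eq_zero_or_pos i with rfl | hi1
  · simpa using h0
  · have : (1 : ℝ) ≤ i := by exact_mod_cast hi1
    gcongr
    exact h i hi hi1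

theorem sum_range_sub_one_mul_mul_pow_neg {n : ℕ} (hn : 1 ≤ n) {a : ℕ → ℝ} (ha0 : 1 ≤ a 0)
    (ha : ∀ i, 1 ≤ i → i ≤ n → a i ≤ (2 * n).choose i) {x : ℝ}
    (hx : x ∈ Set.Ioc (0 : ℝ) (1 / (2 * n - 1))) :
    ∑ i ∈ range (n + 1), ((i : ℝ) - 1) * a i * x ^ i < 0 := by
  obtain ⟨hx0, hx⟩ := hx
  rw [le_div_iff₀ (by linarith [(Nat.one_le_cast (α := ℝ)).2 hn]), mul_comm] at hx
  refine (sum_sub_one_mul_mul_pow_le _ (by simpa using ha0) (fun i hi hi1 => ?_) hx0.le).trans_lt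
    (sum_range_sub_one_mul_choose_mul_pow_neg (m := 2 * n) hn (by omega) hx0
      (by push_cast; linarith))
  exact ha i hi1 (Nat.lt_succ_iff.1 (mem_range.1 hi))

theorem sum_mul_pow_pos_of_sum_sub_one_mul_mul_pow_neg {s : Finset ℕ} {a : ℕ → ℝ}
    (ha : ∀ i, 0 ≤ a i) {x : ℝ} (hx : 0 ≤ x) (h : ∑ i ∈ s, ((i : ℝ) - 1) * a i * x ^ i < 0) :
    0 < ∑ i ∈ s, a i * x ^ i := by
  simp only [sub_mul, one_mul, sum_sub_distrib] at h
  have : 0 ≤ ∑ i ∈ s, i * a i * x ^ i := sum_nonneg fun i _ => by have := ha i; positivity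
  linarith

theorem strictMonoOn_sum_mul_pow_div_sum_mul_pow {s : Finset ℕ} {a b : ℕ → ℝ} {D : Set ℝ}
    (hD : Convex ℝ D) (hDpos : D ⊆ Set.Ioi 0) (ha : ∀ i, 0 ≤ a i) (hb : ∀ i, 0 ≤ b i)
    (hb0 : b 0 = 0) (hbpos : ∃ i ∈ s, 0 < b i)
    (h : ∀ x ∈ D, ∑ i ∈ s, ((i : ℝ) - 1) * a i * x ^ i < 0) :
    StrictMonoOn (fun x => (∑ i ∈ s, b i * x ^ i) / ∑ i ∈ s, a i * x ^ i) D := by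
  have hF : ∀ x ∈ D, 0 < ∑ i ∈ s, a i * x ^ i := fun x hx =>
    sum_mul_pow_pos_of_sum_sub_one_mul_mul_pow_neg ha (le_of_lt (hDpos hx)) (h x hx)
  refine strictMonoOn_of_deriv_pos hD ?_ fun x hx => ?_
  · exact ContinuousOn.div (by fun_prop) (by fun_prop) fun x hx => (hF x hx).ne'
  have hxD := interior_subset hx
  have hx0 : 0 < x := hDpos hxD
  rw [((hasDerivAt_sum_mul_pow s b x).fun_div (hasDerivAt_sum_mul_pow s a x) (hF x hxD).ne').deriv]
  refine div_pos (pos_of_mul_pos_right ?_ hx0.le) (pow_pos (hF x hxD) 2)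
  set F := ∑ i ∈ s, a i * x ^ i
  set θF := ∑ i ∈ s, i * a i * x ^ i
  have hθF : θF < F := by
    have := h x hxD
    simp only [sub_mul, one_mul, sum_sub_distrib] at this
    linarith
  have hfactor : ∀ i ∈ s, 0 < b i → 0 < b i * x ^ i * (i * F - θF) := by
    intro i _ hbi
    have hi : (1 : ℝ) ≤ i := by
      exact_mod_cast Nat.one_le_iff_ne_zero.2 (by rintro rfl; simp [hb0] at hbi)
    have : 0 < i * F - θF := by nlinarith [hF x hxD]
    positivity
  calc (0 : ℝ) < ∑ i ∈ s, b i * x ^ i * (i * F - θF) := by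
        obtain ⟨j, hj, hbj⟩ := hbpos
        refine sum_pos' (fun i hi => ?_) ⟨j, hj, hfactor j hj hbj⟩
        rcases (hb i).eq_or_lt with hbi | hbi
        · simp [← hbi]
        · exact (hfactor i hi hbi).le
    _ = (x * ∑ i ∈ s, b i * (i * x ^ (i - 1))) * F
          - (∑ i ∈ s, b i * x ^ i) * (x * ∑ i ∈ s, a i * (i * x ^ (i - 1))) := by
        rw [mul_sum_mul_pow_pred, mul_sum_mul_pow_pred, sum_mul, sum_mul, ← sum_sub_distrib]
        exact sum_congr rfl fun i _ => by ring
    _ = _ := by ring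

theorem sum_range_mul_pow_mul_pow_sub (c : ℕ → ℝ) {n N : ℕ} (hnN : n ≤ N) (u : ℝ) {v : ℝ}
    (hv : v ≠ 0) :
    ∑ i ∈ range (n + 1), c i * u ^ i * v ^ (N - i)
      = v ^ N * ∑ i ∈ range (n + 1), c i * (u / v) ^ i := by
  rw [mul_sum]
  refine sum_congr rfl fun i hi => ?_
  rw [← Nat.sub_add_cancel ((Nat.lt_succ_iff.1 (mem_range.1 hi)).trans hnN), pow_add,
    Nat.add_sub_cancel, div_pow]
  field_simp

theorem sum_range_mul_half_pow_mul_one_sub_half_pow (c : ℕ → ℝ) {n N : ℕ} (hnN : n ≤ N) {p : ℝ}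
    (hp : p ≠ 2) :
    ∑ i ∈ range (n + 1), c i * (p / 2) ^ i * (1 - p / 2) ^ (N - i)
      = (1 - p / 2) ^ N * ∑ i ∈ range (n + 1), c i * (p / (2 - p)) ^ i := by
  have hp' : 1 - p / 2 ≠ 0 := fun h => hp (by linarith)
  rw [sum_range_mul_pow_mul_pow_sub _ hnN _ hp']
  congr 4 with i
  field_simp

theorem strictMonoOn_div_two_sub : StrictMonoOn (fun p : ℝ => p / (2 - p)) (Set.Iio 2) := by
  intro p hp q hq hpq
  simp only [Set.mem_Iio] at hp hq
  rw [div_lt_div_iff₀ (by linarith) (by linarith)]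
  linarith

theorem div_two_sub_mem_Ioc {n : ℝ} (hn : 1 ≤ n) {p : ℝ} (hp : p ∈ Set.Ioc 0 (1 / n)) :
    p / (2 - p) ∈ Set.Ioc 0 (1 / (2 * n - 1)) := by
  obtain ⟨hp0, hpn⟩ := hp
  rw [le_div_iff₀ (by linarith), mul_comm] at hpn
  have hp1 : p ≤ 1 := by nlinarith
  refine ⟨div_pos hp0 (by linarith), ?_⟩
  rw [div_le_div_iff₀ (by linarith) (by linarith)]
  linarith

/-- The ratio `g p / f p` of the nontrivial-class and trivial-class
weight-enumerator probability polynomials is strictly increasing on `(0, 1/n]`;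
consequently for each `v > 0` there is at most one crossing point
`p ∈ (0, 1/n]` with `g p = v * f p`. -/
theorem crossing_point_unique (n : ℕ) (hn : 1 ≤ n) (W B : ℕ → ℕ)
    (hW0 : W 0 = 1) (hW : ∀ i, 1 ≤ i → i ≤ n → W i ≤ (2 * n).choose i)
    (hB0 : B 0 = 0) (hB : ∃ i, 1 ≤ i ∧ i ≤ n ∧ 1 ≤ B i) :
    let f : ℝ → ℝ := fun p => ∑ i ∈ Finset.range (n + 1),
      (W i : ℝ) * (p / 2) ^ i * (1 - p / 2) ^ (2 * n - i)
    let g : ℝ → ℝ := fun p => ∑ i ∈ Finset.range (n + 1),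
      (B i : ℝ) * (p / 2) ^ i * (1 - p / 2) ^ (2 * n - i)
    StrictMonoOn (fun p => g p / f p) (Set.Ioc 0 (1 / (n : ℝ))) ∧
      ∀ v : ℝ, 0 < v →
        ∀ p₁ ∈ Set.Ioc (0 : ℝ) (1 / (n : ℝ)), ∀ p₂ ∈ Set.Ioc (0 : ℝ) (1 / (n : ℝ)),
          g p₁ = v * f p₁ → g p₂ = v * f p₂ → p₁ = p₂ := by
  intro f g
  have hn' : (1 : ℝ) ≤ n := by exact_mod_cast hn
  have hlt2 : Set.Ioc (0 : ℝ) (1 / n) ⊆ Set.Iio 2 := fun p hp =>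
    lt_of_le_of_lt hp.2 (by rw [div_lt_iff₀ (by linarith)]; linarith)
  have hodds : ∀ (C : ℕ → ℕ), ∀ p ∈ Set.Ioc (0 : ℝ) (1 / n),
      ∑ i ∈ range (n + 1), (C i : ℝ) * (p / 2) ^ i * (1 - p / 2) ^ (2 * n - i)
        = (1 - p / 2) ^ (2 * n) * ∑ i ∈ range (n + 1), (C i : ℝ) * (p / (2 - p)) ^ i :=
    fun C p hp => sum_range_mul_half_pow_mul_one_sub_half_pow _ (by omega) (hlt2 hp).ne
  have hq : ∀ p ∈ Set.Ioc (0 : ℝ) (1 / n), (1 - p / 2) ^ (2 * n) ≠ 0 := fun p hp =>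
    pow_ne_zero _ (by linarith [Set.mem_Iio.1 (hlt2 hp)])
  have hEuler : ∀ x ∈ Set.Ioc (0 : ℝ) (1 / (2 * n - 1)),
      ∑ i ∈ range (n + 1), ((i : ℝ) - 1) * W i * x ^ i < 0 := fun x hx =>
    sum_range_sub_one_mul_mul_pow_neg hn (by simp [hW0]) (fun i hi1 hin => by
      exact_mod_cast hW i hi1 hin) hx
  obtain ⟨j, -, hjn, hBj⟩ := hB
  have hratio : StrictMonoOn (fun x => (∑ i ∈ range (n + 1), (B i : ℝ) * x ^ i) /
      ∑ i ∈ range (n + 1), (W i : ℝ) * x ^ i) (Set.Ioc 0 (1 / (2 * n - 1))) :=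
    strictMonoOn_sum_mul_pow_div_sum_mul_pow (convex_Ioc _ _) Set.Ioc_subset_Ioi_self
      (fun i => Nat.cast_nonneg (W i)) (fun i => Nat.cast_nonneg (B i)) (by simp [hB0])
      ⟨j, mem_range.2 (Nat.lt_succ_of_le hjn), by exact_mod_cast hBj⟩ hEuler
  have hmono : StrictMonoOn (fun p => g p / f p) (Set.Ioc 0 (1 / n)) :=
    (hratio.comp (strictMonoOn_div_two_sub.mono hlt2) fun p hp => div_two_sub_mem_Ioc hn' hp).congr
      fun p hp => by simp only [Function.comp, f, g, hodds _ p hp, mul_div_mul_left _ _ (hq p hp)]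
  have hf : ∀ p ∈ Set.Ioc (0 : ℝ) (1 / n), f p ≠ 0 := fun p hp => by
    simp only [f, hodds W p hp]
    exact mul_ne_zero (hq p hp) (sum_mul_pow_pos_of_sum_sub_one_mul_mul_pow_neg
      (fun i => Nat.cast_nonneg (W i)) (div_two_sub_mem_Ioc hn' hp).1.le
      (hEuler _ (div_two_sub_mem_Ioc hn' hp))).ne'
  refine ⟨hmono, fun v _ p₁ hp₁ p₂ hp₂ h₁ h₂ => hmono.injOn hp₁ hp₂ ?_⟩
  simp only [h₁, h₂, mul_div_cancel_right₀ _ (hf p₁ hp₁), mul_div_cancel_right₀ _ (hf p₂ hp₂)]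
end

section
/- Let m be a natural number, let S ⊆ N be finite sets of vectors in Fin m → ZMod 2 with 0 ∈ S, and let x₀ ∈ Fin m → ZMod 2 satisfy wt(x₀) ≤ wt(x₀ + y) for all y ∈ N. Then for every real t with 0 < t ≤ 1, ∑_{y ∈ S} t^{wt(x₀ + y)} ≥ (1/|N|) · ∑_{y ∈ N} t^{wt(x₀ + y)}, where wt denotes the Hamming weight and |N| is the cardinality of N. -/
open Finset
open scoped BigOperators

/-- If `S ⊆ N` are finite sets of binary vectors with `0 ∈ S` and `x₀` is a
minimum-weight element of its coset `x₀ + N`, then for `0 < t ≤ 1` the class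
containing `x₀` carries at least a `1/|N|` fraction of the total probability:
`∑_{y ∈ S} t^{wt(x₀+y)} ≥ (1/|N|) * ∑_{y ∈ N} t^{wt(x₀+y)}`. -/
theorem min_weight_class_prob_lower_bound (m : ℕ)
    (S N : Finset (Fin m → ZMod 2)) (hSN : S ⊆ N) (h0 : (0 : Fin m → ZMod 2) ∈ S)
    (x₀ : Fin m → ZMod 2)
    (hmin : ∀ y ∈ N, hammingNorm x₀ ≤ hammingNorm (x₀ + y))
    (t : ℝ) (ht0 : 0 < t) (ht1 : t ≤ 1) :
    (1 / (N.card : ℝ)) * ∑ y ∈ N, t ^ hammingNorm (x₀ + y)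
      ≤ ∑ y ∈ S, t ^ hammingNorm (x₀ + y) := by
  rw [one_div_mul_eq_div, ← expect_eq_sum_div_card]
  calc 𝔼 y ∈ N, t ^ hammingNorm (x₀ + y)
      ≤ t ^ hammingNorm x₀ :=
        expect_le ⟨0, hSN h0⟩ fun y hy ↦ pow_le_pow_of_le_one ht0.le ht1 (hmin y hy)
    _ ≤ ∑ y ∈ S, t ^ hammingNorm (x₀ + y) := by
        simpa using single_le_sum (fun y _ ↦ pow_nonneg ht0.le (hammingNorm (x₀ + y))) h0
end

section
/- Let n ≥ 1 and 0 ≤ k ≤ n − 1 be natural numbers, set N = 2n − k − 1, and let g, h : Fin n → (Fin n → ZMod 2) satisfy ∑_{l} (h i l) · (g j l) = 1 if i = j and 0 otherwise, for all i, j. Let pad : (Fin n → ZMod 2) → (Fin N → ZMod 2) extend a vector by zeros, and for n ≤ r < N let e_r : Fin N → ZMod 2 be the standard basis vector with a 1 in coordinate r. Define, with 0-based indices, the vectors in the product space (Fin N → ZMod 2) × (Fin N → ZMod 2): A_i = (pad(g i), 0) for 0 ≤ i < k; B_j = (pad(g (k+j)) + e_{n+j}, 0) and C_j = (0, pad(h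 (k+j)) + e_{n+j}) for 0 ≤ j < n − k − 1. Then any two (not necessarily distinct) vectors among the A_i, B_j, C_j have symplectic product ω equal to 0, where ω((z,x),(z',x')) = ∑_l z_l·x'_l + ∑_l x_l·z'_l ∈ ZMod 2. -/
/-!
The generators `A_i`, `B_j` have only `Z` parts and the `C_j` only `X` parts, so two generators
of the same kind have symplectic product zero trivially, and a `Z`-type against an `X`-type one
gives the dot product of their supports. Padding does not change dot products, and the padded
part meets the ancilla coordinates `e_{n+j}` trivially. Hence `ω(A_i, C_j) = g_i ⬝ h_{k+j} = 0`
since `i < k ≤ k + j`, and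
`ω(B_j, C_{j'}) = g_{k+j} ⬝ h_{k+j'} + e_{n+j} ⬝ e_{n+j'} = 2 δ_{jj'} = 0` in characteristic two.
-/

/-- Pad a vector in `Fin n → ZMod 2` with zeros to a vector in `Fin N → ZMod 2`. -/
def padV (n N : ℕ) (v : Fin n → ZMod 2) : Fin N → ZMod 2 :=
  fun r => if h : (r : ℕ) < n then v ⟨r, h⟩ else 0

/-- Standard basis vector of `Fin N → ZMod 2` with a `1` in coordinate `r`. -/
def eV (N : ℕ) (r : ℕ) : Fin N → ZMod 2 := fun l => if (l : ℕ) = r then 1 else 0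

/-- Symplectic product of two Pauli operators in binary representation. -/
def sympl (N : ℕ) (u v : (Fin N → ZMod 2) × (Fin N → ZMod 2)) : ZMod 2 :=
  (∑ l, u.1 l * v.2 l) + (∑ l, u.2 l * v.1 l)

/-- The symplectic representatives of the stabilizer generators
`S_i = Z^{g_i}` (for `i < k`), `S_{k+j} = Z^{g_{k+j}} ⊗ Z_{n+j}` and
`S_{n-1+j} = X^{h_{k+j}} ⊗ X_{n+j}` (for `j < n - k - 1`) of the
`[[2n-k-1, 1]]` code built from a classical code with generator rows `g`. -/
def gens (n k : ℕ) (hn : 1 ≤ n) (hk : k ≤ n - 1) (g h : Fin n → Fin n → ZMod 2) :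
    Fin k ⊕ Fin (n - k - 1) ⊕ Fin (n - k - 1) →
      (Fin (2 * n - k - 1) → ZMod 2) × (Fin (2 * n - k - 1) → ZMod 2)
  | Sum.inl i => (padV n (2 * n - k - 1) (g ⟨i.1, by have := i.2; omega⟩), 0)
  | Sum.inr (Sum.inl j) =>
      (padV n (2 * n - k - 1) (g ⟨k + j.1, by have := j.2; omega⟩)
        + eV (2 * n - k - 1) (n + j.1), 0)
  | Sum.inr (Sum.inr j) =>
      (0, padV n (2 * n - k - 1) (h ⟨k + j.1, by have := j.2; omega⟩)
        + eV (2 * n - k - 1) (n + j.1))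

open Matrix

section Vectors

variable {n N : ℕ}

lemma padV_apply_of_le (v : Fin n → ZMod 2) {l : Fin N} (hl : n ≤ l) : padV n N v l = 0 :=
  dif_neg (not_lt.mpr hl)

lemma eV_eq_single {r : ℕ} (hr : r < N) : eV N r = Pi.single (⟨r, hr⟩ : Fin N) 1 := by
  ext l
  simp [eV, Pi.single_apply, Fin.ext_iff]

lemma padV_dotProduct_padV (hN : n ≤ N) (v w : Fin n → ZMod 2) :
    padV n N v ⬝ᵥ padV n N w = v ⬝ᵥ w := by
  refine (Fintype.sum_of_injective (Fin.castLE hN) (Fin.castLE_injective hN) _ _ ?_ ?_).symm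
  · rintro l hl
    have hnl : n ≤ l := not_lt.mp fun hlt => hl ⟨⟨l, hlt⟩, rfl⟩
    simp [padV_apply_of_le _ hnl]
  · intro l
    simp [padV]

lemma padV_mul_eV {r : ℕ} (hr : n ≤ r) (v : Fin n → ZMod 2) (l : Fin N) :
    padV n N v l * eV N r l = 0 := by
  by_cases hl : n ≤ l
  · rw [padV_apply_of_le v hl, zero_mul]
  · have hlr : (l : ℕ) ≠ r := by omega
    simp [eV, hlr]

lemma padV_dotProduct_eV {r : ℕ} (hr : n ≤ r) (v : Fin n → ZMod 2) :
    padV n N v ⬝ᵥ eV N r = 0 :=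
  Finset.sum_eq_zero fun l _ => padV_mul_eV hr v l

lemma eV_dotProduct_padV {r : ℕ} (hr : n ≤ r) (v : Fin n → ZMod 2) :
    eV N r ⬝ᵥ padV n N v = 0 := by
  rw [dotProduct_comm, padV_dotProduct_eV hr]

lemma eV_dotProduct_eV {r : ℕ} (hr : r < N) (s : ℕ) :
    eV N r ⬝ᵥ eV N s = if r = s then 1 else 0 := by
  rw [eV_eq_single hr, single_dotProduct, one_mul]
  rfl

end Vectors

section Symplectic

variable {N : ℕ}

lemma sympl_eq_dotProduct (u v : (Fin N → ZMod 2) × (Fin N → ZMod 2)) :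
    sympl N u v = u.1 ⬝ᵥ v.2 + u.2 ⬝ᵥ v.1 :=
  rfl

lemma sympl_comm (u v : (Fin N → ZMod 2) × (Fin N → ZMod 2)) : sympl N u v = sympl N v u := by
  rw [sympl_eq_dotProduct, sympl_eq_dotProduct, dotProduct_comm u.1, dotProduct_comm u.2, add_comm]

lemma sympl_mk_zero_mk_zero (z z' : Fin N → ZMod 2) : sympl N (z, 0) (z', 0) = 0 := by
  simp [sympl]

lemma sympl_zero_mk_zero_mk (x x' : Fin N → ZMod 2) : sympl N (0, x) (0, x') = 0 := by
  simp [sympl]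

lemma sympl_mk_zero_zero_mk (z x : Fin N → ZMod 2) : sympl N (z, 0) (0, x) = z ⬝ᵥ x := by
  rw [sympl_eq_dotProduct, zero_dotProduct, add_zero]

end Symplectic

section Generators

variable {n k : ℕ} {hn : 1 ≤ n} {hk : k ≤ n - 1} {g h : Fin n → Fin n → ZMod 2}

lemma dotProduct_eq_ite_of_dual
    (hdual : ∀ i j, (∑ l, h i l * g j l) = if i = j then 1 else 0) (i j : Fin n) :
    g i ⬝ᵥ h j = if j = i then 1 else 0 := by
  rw [dotProduct_comm]
  exact hdual j i

lemma sympl_gens_inl_inr_inr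
    (hdual : ∀ i j, (∑ l, h i l * g j l) = if i = j then 1 else 0)
    (i : Fin k) (j : Fin (n - k - 1)) :
    sympl (2 * n - k - 1) (gens n k hn hk g h (.inl i))
      (gens n k hn hk g h (.inr (.inr j))) = 0 := by
  have hij : (⟨k + j, by omega⟩ : Fin n) ≠ ⟨i, by omega⟩ := by
    simp only [ne_eq, Fin.mk.injEq]
    omega
  rw [gens, gens, sympl_mk_zero_zero_mk, dotProduct_add, padV_dotProduct_padV (by omega),
    padV_dotProduct_eV (by omega), dotProduct_eq_ite_of_dual hdual, if_neg hij, add_zero]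

lemma sympl_gens_inr_inl_inr_inr
    (hdual : ∀ i j, (∑ l, h i l * g j l) = if i = j then 1 else 0) (j j' : Fin (n - k - 1)) :
    sympl (2 * n - k - 1) (gens n k hn hk g h (.inr (.inl j)))
      (gens n k hn hk g h (.inr (.inr j'))) = 0 := by
  rw [gens, gens, sympl_mk_zero_zero_mk, add_dotProduct, dotProduct_add, dotProduct_add,
    padV_dotProduct_padV (by omega), padV_dotProduct_eV (by omega), eV_dotProduct_padV (by omega),
    eV_dotProduct_eV (by omega), dotProduct_eq_ite_of_dual hdual]
  simp only [Fin.mk.injEq, Nat.add_left_cancel_iff, Fin.val_inj, add_zero, zero_add,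
    eq_comm (a := j')]
  exact CharTwo.add_self_eq_zero _

end Generators

/-- The stabilizer generators of the `[[2n-k-1, 1]]` code constructed from dual
bases `g`, `h` of `𝔽₂ⁿ` mutually commute: any two of them have vanishing
symplectic product. -/
theorem gens_mutually_commute (n k : ℕ) (hn : 1 ≤ n) (hk : k ≤ n - 1)
    (g h : Fin n → Fin n → ZMod 2)
    (hdual : ∀ i j, (∑ l, h i l * g j l) = if i = j then 1 else 0) :
    ∀ a b : Fin k ⊕ Fin (n - k - 1) ⊕ Fin (n - k - 1),
      sympl (2 * n - k - 1) (gens n k hn hk g h a) (gens n k hn hk g h b) = 0 := by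
  rintro (i | j | j) (i' | j' | j')
  · exact sympl_mk_zero_mk_zero _ _
  · exact sympl_mk_zero_mk_zero _ _
  · exact sympl_gens_inl_inr_inr hdual i j'
  · exact sympl_mk_zero_mk_zero _ _
  · exact sympl_mk_zero_mk_zero _ _
  · exact sympl_gens_inr_inl_inr_inr hdual j j'
  · rw [sympl_comm]
    exact sympl_gens_inl_inr_inr hdual i' j
  · rw [sympl_comm]
    exact sympl_gens_inr_inl_inr_inr hdual j' j
  · exact sympl_zero_mk_zero_mk _ _
end
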